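/- Let ρ₁, …, ρ_K be 2×2 density matrices (qubit states) and p₁, …, p_K nonnegative weights summing to 1. Then the K×K matrix C_F with entries (C_F)ᵢⱼ = √(pᵢ pⱼ) F(ρᵢ; ρⱼ) is positive semidefinite. -/

import Mathlib

open scoped Classical

open Matrix ComplexOrder

/-- The positive semidefinite square root of a matrix: the unique PSD square root
when the matrix is PSD, and `0` otherwise. -/
noncomputable def msqrt {n : Type*} [Fintype n] [DecidableEq n]
    (A : Matrix n n ℂ) : Matrix n n ℂ :=
  if h : A.PosSemidef then
    (h.1.eigenvectorUnitary : Matrix n n ℂ) * diagonal ((↑) ∘ Real.sqrt ∘ h.1.eigenvalues) *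
      (star h.1.eigenvectorUnitary : Matrix n n ℂ)
  else 0

/-- Fidelity between two states: `F(ρ₁; ρ₂) = (tr √(√ρ₁ · ρ₂ · √ρ₁))²`. -/
noncomputable def fidelity {n : Type*} [Fintype n] [DecidableEq n]
    (ρ₁ ρ₂ : Matrix n n ℂ) : ℝ :=
  ((msqrt (msqrt ρ₁ * ρ₂ * msqrt ρ₁)).trace).re ^ 2

/-! Every `2 × 2` matrix satisfies `(tr S)² = tr S² + 2 det S`. Applied to `S = √(√ρ σ √ρ)`
this gives the qubit fidelity in closed form, `F(ρ; σ) = tr(ρσ) + 2 √(det ρ · det σ)`. Hence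
`C_F` is the Gram matrix of the matrices `√pᵢ ρᵢ` for the Hilbert–Schmidt inner product plus
twice the rank-one matrix `w wᵀ` with `wᵢ = √(pᵢ det ρᵢ)`. -/

open scoped MatrixOrder

theorem msqrt_eq_cfcSqrt {n : Type*} [Fintype n] [DecidableEq n] {A : Matrix n n ℂ}
    (hA : A.PosSemidef) : msqrt A = CFC.sqrt A := by
  rw [msqrt, dif_pos hA, CFC.sqrt_eq_cfc, cfc_nnreal_eq_real _ A, hA.1.cfc_eq]
  simp only [IsHermitian.cfc, Unitary.conjStarAlgAut_apply]
  congr 3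
  ext i
  simp [hA.eigenvalues_nonneg i]

theorem Matrix.trace_sq_fin_two {R : Type*} [CommRing R] (S : Matrix (Fin 2) (Fin 2) R) :
    S.trace ^ 2 = (S * S).trace + 2 * S.det := by
  simp only [trace_fin_two, det_fin_two, mul_apply, Fin.sum_univ_two]
  ring

theorem Matrix.PosSemidef.trace_sqrt_sq_fin_two {M : Matrix (Fin 2) (Fin 2) ℂ}
    (hM : M.PosSemidef) : (CFC.sqrt M).trace ^ 2 = M.trace + 2 * RCLike.sqrt M.det := by
  rw [trace_sq_fin_two, CFC.sqrt_mul_sqrt_self M hM.nonneg, hM.det_sqrt]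

theorem Matrix.PosSemidef.re_trace_sqrt_sq_fin_two {M : Matrix (Fin 2) (Fin 2) ℂ}
    (hM : M.PosSemidef) : (CFC.sqrt M).trace.re ^ 2 = M.trace.re + 2 * √M.det.re := by
  have him : (CFC.sqrt M).trace.im = 0 :=
    (Complex.nonneg_iff.mp (CFC.sqrt_nonneg M).posSemidef.trace_nonneg).2.symm
  have := congrArg Complex.re hM.trace_sqrt_sq_fin_two
  rw [RCLike.sqrt_of_nonneg hM.det_nonneg] at this
  simpa [sq, him] using this

theorem fidelity_fin_two {ρ σ : Matrix (Fin 2) (Fin 2) ℂ} (hρ : ρ.PosSemidef)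
    (hσ : σ.PosSemidef) :
    fidelity ρ σ = (ρ * σ).trace.re + 2 * (√ρ.det.re * √σ.det.re) := by
  set S := CFC.sqrt ρ
  have hS : S.PosSemidef := (CFC.sqrt_nonneg ρ).posSemidef
  have hSS : S * S = ρ := CFC.sqrt_mul_sqrt_self ρ hρ.nonneg
  have hM : (S * σ * S).PosSemidef := by
    simpa [hS.1.eq] using hσ.mul_mul_conjTranspose_same S
  have htrace : (S * σ * S).trace = (ρ * σ).trace := by
    rw [trace_mul_cycle, hSS, trace_mul_comm]
  have hdet : (S * σ * S).det = ρ.det * σ.det := by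
    rw [← hSS, det_mul, det_mul, det_mul]
    ring
  have hρdet := Complex.nonneg_iff.mp hρ.det_nonneg
  have hσdet := Complex.nonneg_iff.mp hσ.det_nonneg
  rw [fidelity, msqrt_eq_cfcSqrt hρ, msqrt_eq_cfcSqrt hM, hM.re_trace_sqrt_sq_fin_two, htrace,
    hdet, Complex.mul_re, ← hρdet.2, ← hσdet.2, mul_zero, sub_zero, Real.sqrt_mul hρdet.1]

theorem Matrix.posSemidef_re_trace_conjTranspose_mul {ι m n : Type*} [Fintype ι] [Fintype m]
    [Fintype n] (A : ι → Matrix m n ℂ) :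
    (of fun i j ↦ ((A i)ᴴ * A j).trace.re).PosSemidef := by
  have hgram : (of fun i j ↦ ((A i)ᴴ * A j).trace.re) =
      gram ℝ fun i ↦ (WithLp.toLp 2 (vec (A i)) : EuclideanSpace ℂ (n × m)) := by
    ext i j
    rw [of_apply, gram_apply, ← star_vec_dotProduct_vec]
    simp [dotProduct, PiLp.inner_apply, mul_comm]
  exact hgram ▸ posSemidef_gram ℝ _

theorem qubit_fidelity_matrix_posSemidef_general {K : ℕ}
    (ρ : Fin K → Matrix (Fin 2) (Fin 2) ℂ)
    (hpsd : ∀ i, (ρ i).PosSemidef)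
    (p : Fin K → ℝ) (hp : ∀ i, 0 ≤ p i) :
    (Matrix.of fun i j : Fin K =>
      Real.sqrt (p i * p j) * fidelity (ρ i) (ρ j)).PosSemidef := by
  set A : Fin K → Matrix (Fin 2) (Fin 2) ℂ := fun i ↦ √(p i) • ρ i
  set w : Fin K → ℝ := fun i ↦ √(p i) * √(ρ i).det.re
  have hC : (of fun i j ↦ √(p i * p j) * fidelity (ρ i) (ρ j)) =
      of (fun i j ↦ ((A i)ᴴ * A j).trace.re) + (2 : ℝ) • vecMulVec w (star w) := by
    ext i j
    simp only [of_apply, Real.sqrt_mul (hp i), fidelity_fin_two (hpsd i) (hpsd j),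
      conjTranspose_smul, star_trivial, Algebra.mul_smul_comm, Algebra.smul_mul_assoc,
      trace_smul, Complex.real_smul, Complex.mul_re, Complex.ofReal_re, Complex.ofReal_im,
      zero_mul, sub_zero, Matrix.add_apply, (hpsd i).1.eq, Matrix.smul_apply, vecMulVec_apply,
      smul_eq_mul, A, w]
    ring
  rw [hC]
  exact (posSemidef_re_trace_conjTranspose_mul A).add
    ((posSemidef_vecMulVec_self_star w).smul zero_le_two)

/-- For any ensemble of qubit states, the matrix `(C_F)ᵢⱼ = √(pᵢpⱼ) F(ρᵢ; ρⱼ)` is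
positive semidefinite. -/
theorem qubit_fidelity_matrix_posSemidef {K : ℕ}
    (ρ : Fin K → Matrix (Fin 2) (Fin 2) ℂ)
    (hpsd : ∀ i, (ρ i).PosSemidef) (htr : ∀ i, (ρ i).trace = 1)
    (p : Fin K → ℝ) (hp : ∀ i, 0 ≤ p i) (hsum : ∑ i, p i = 1) :
    (Matrix.of fun i j : Fin K =>
      Real.sqrt (p i * p j) * fidelity (ρ i) (ρ j)).PosSemidef :=
  qubit_fidelity_matrix_posSemidef_general ρ hpsd p hp
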